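/- Suppose q₁ and q₂ are nonvanishing on U. Then the following are equivalent: (i) k₂·q₁·∂₁k₁ + k₁·q₂·∂₂k₁ = 0 and k₂·q₁·∂₁k₂ + k₁·q₂·∂₂k₂ = 0 hold at every point of U; (ii) the function k₁·k₂ is constant on U. (Proposition 5(b): for a surface which is not a moulding surface, the nets corresponding to the lines of curvature of the two central surfaces are both conjugate if and only if the surface has constant Gaussian curvature.) -/

import Mathlib

/-- Partial derivative in the first coordinate direction on ℝ². -/
noncomputable def pd1 (f : ℝ × ℝ → ℝ) (p : ℝ × ℝ) : ℝ := fderiv ℝ f p (1, 0)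

/-- Partial derivative in the second coordinate direction on ℝ². -/
noncomputable def pd2 (f : ℝ × ℝ → ℝ) (p : ℝ × ℝ) : ℝ := fderiv ℝ f p (0, 1)

/-! With `K = k₁ k₂`, the Codazzi equations turn the two expressions of (i) into `q₁ ∂₁K` and
`q₂ ∂₂K`. As `q₁, q₂` do not vanish, (i) says that `dK = 0` on `U`, which on a connected open set
means that `K` is constant. -/

theorem IsOpen.forall_fderiv_eq_zero_iff_exists_const {E F : Type*} [NormedAddCommGroup E]
    [NormedSpace ℝ E] [NormedAddCommGroup F] [NormedSpace ℝ F] {s : Set E} {f : E → F}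
    (hs : IsOpen s) (hs' : IsPreconnected s) (hf : DifferentiableOn ℝ f s) :
    (∀ x ∈ s, fderiv ℝ f x = 0) ↔ ∃ c, ∀ x ∈ s, f x = c := by
  refine ⟨fun h => hs.exists_is_const_of_fderiv_eq_zero hs' hf h, ?_⟩
  rintro ⟨c, hc⟩ x hx
  have hf_eq : f =ᶠ[nhds x] fun _ => c := Filter.eventuallyEq_of_mem (hs.mem_nhds hx) hc
  rw [hf_eq.fderiv_eq, fderiv_const_apply]

theorem fderiv_eq_zero_iff_pd1_pd2 (f : ℝ × ℝ → ℝ) (p : ℝ × ℝ) :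
    fderiv ℝ f p = 0 ↔ pd1 f p = 0 ∧ pd2 f p = 0 := by
  refine ⟨fun h => by simp [pd1, pd2, h], fun ⟨h₁, h₂⟩ => ?_⟩
  ext
  · exact h₁
  · exact h₂

section ProductRule

variable {f g : ℝ × ℝ → ℝ} {p : ℝ × ℝ}

theorem pd1_mul (hf : DifferentiableAt ℝ f p) (hg : DifferentiableAt ℝ g p) :
    pd1 (fun x => f x * g x) p = f p * pd1 g p + g p * pd1 f p := by
  simp [pd1, fderiv_fun_mul hf hg]

theorem pd2_mul (hf : DifferentiableAt ℝ f p) (hg : DifferentiableAt ℝ g p) :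
    pd2 (fun x => f x * g x) p = f p * pd2 g p + g p * pd2 f p := by
  simp [pd2, fderiv_fun_mul hf hg]

end ProductRule

section Codazzi

variable {k₁ k₂ q₁ q₂ : ℝ × ℝ → ℝ} {p : ℝ × ℝ}

theorem codazzi_eq_mul_pd1_mul (hk₁ : DifferentiableAt ℝ k₁ p) (hk₂ : DifferentiableAt ℝ k₂ p)
    (codazzi₁ : pd2 k₁ p = q₁ p * (k₁ p - k₂ p)) (codazzi₂ : pd1 k₂ p = q₂ p * (k₁ p - k₂ p)) :
    k₂ p * q₁ p * pd1 k₁ p + k₁ p * q₂ p * pd2 k₁ p = q₁ p * pd1 (fun x => k₁ x * k₂ x) p := by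
  rw [pd1_mul hk₁ hk₂]
  linear_combination k₁ p * q₂ p * codazzi₁ - q₁ p * k₁ p * codazzi₂

theorem codazzi_eq_mul_pd2_mul (hk₁ : DifferentiableAt ℝ k₁ p) (hk₂ : DifferentiableAt ℝ k₂ p)
    (codazzi₁ : pd2 k₁ p = q₁ p * (k₁ p - k₂ p)) (codazzi₂ : pd1 k₂ p = q₂ p * (k₁ p - k₂ p)) :
    k₂ p * q₁ p * pd1 k₂ p + k₁ p * q₂ p * pd2 k₂ p = q₂ p * pd2 (fun x => k₁ x * k₂ x) p := by
  rw [pd2_mul hk₁ hk₂]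
  linear_combination -(q₂ p * k₂ p * codazzi₁) + k₂ p * q₁ p * codazzi₂

end Codazzi

theorem stmt_1_general (U : Set (ℝ × ℝ)) (hU : IsOpen U) (hUconn : IsConnected U)
    (k₁ k₂ q₁ q₂ : ℝ × ℝ → ℝ)
    (hk₁ : ∀ p ∈ U, DifferentiableAt ℝ k₁ p)
    (hk₂ : ∀ p ∈ U, DifferentiableAt ℝ k₂ p)
    (codazzi₁ : ∀ p ∈ U, pd2 k₁ p = q₁ p * (k₁ p - k₂ p))
    (codazzi₂ : ∀ p ∈ U, pd1 k₂ p = q₂ p * (k₁ p - k₂ p))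
    (hq₁ne : ∀ p ∈ U, q₁ p ≠ 0)
    (hq₂ne : ∀ p ∈ U, q₂ p ≠ 0) :
    (∀ p ∈ U, k₂ p * q₁ p * pd1 k₁ p + k₁ p * q₂ p * pd2 k₁ p = 0 ∧
              k₂ p * q₁ p * pd1 k₂ p + k₁ p * q₂ p * pd2 k₂ p = 0) ↔
    (∃ c : ℝ, ∀ p ∈ U, k₁ p * k₂ p = c) := by
  have hK : DifferentiableOn ℝ (fun p => k₁ p * k₂ p) U := fun p hp =>
    ((hk₁ p hp).mul (hk₂ p hp)).differentiableWithinAt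
  rw [← hU.forall_fderiv_eq_zero_iff_exists_const hUconn.isPreconnected hK]
  refine forall₂_congr fun p hp => ?_
  rw [fderiv_eq_zero_iff_pd1_pd2,
    codazzi_eq_mul_pd1_mul (hk₁ p hp) (hk₂ p hp) (codazzi₁ p hp) (codazzi₂ p hp),
    codazzi_eq_mul_pd2_mul (hk₁ p hp) (hk₂ p hp) (codazzi₁ p hp) (codazzi₂ p hp),
    mul_eq_zero_iff_left (hq₁ne p hp), mul_eq_zero_iff_left (hq₂ne p hp)]

theorem stmt_1 (U : Set (ℝ × ℝ)) (hU : IsOpen U) (hUconn : IsConnected U)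
    (k₁ k₂ q₁ q₂ : ℝ × ℝ → ℝ)
    (hk₁ : ∀ p ∈ U, DifferentiableAt ℝ k₁ p)
    (hk₂ : ∀ p ∈ U, DifferentiableAt ℝ k₂ p)
    (hq₁ : ∀ p ∈ U, DifferentiableAt ℝ q₁ p)
    (hq₂ : ∀ p ∈ U, DifferentiableAt ℝ q₂ p)
    (codazzi₁ : ∀ p ∈ U, pd2 k₁ p = q₁ p * (k₁ p - k₂ p))
    (codazzi₂ : ∀ p ∈ U, pd1 k₂ p = q₂ p * (k₁ p - k₂ p))
    (hq₁ne : ∀ p ∈ U, q₁ p ≠ 0)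
    (hq₂ne : ∀ p ∈ U, q₂ p ≠ 0) :
    (∀ p ∈ U, k₂ p * q₁ p * pd1 k₁ p + k₁ p * q₂ p * pd2 k₁ p = 0 ∧
              k₂ p * q₁ p * pd1 k₂ p + k₁ p * q₂ p * pd2 k₂ p = 0) ↔
    (∃ c : ℝ, ∀ p ∈ U, k₁ p * k₂ p = c) :=
  stmt_1_general U hU hUconn k₁ k₂ q₁ q₂ hk₁ hk₂ codazzi₁ codazzi₂ hq₁ne hq₂ne
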